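/- arXiv:1512.05490 — 9 statements merged into one kernel-verified Lean document; each statement's English description precedes it below -/
import Mathlib

section
/- Every convex contraction on a complete metric space has a unique fixed point. That is, if (X,d) is a nonempty complete metric space and f : X → X is continuous and there exist a, b ∈ (0,1) with a + b < 1 such that d(f(f(x)), f(f(y))) ≤ a·d(f(x), f(y)) + b·d(x,y) for all x, y ∈ X, then f has a unique fixed point x* ∈ X. -/
/-! The gaps `dₙ = d(fⁿ x, fⁿ⁺¹ x)` along an orbit satisfy `dₙ₊₂ ≤ a dₙ₊₁ + b dₙ`.
Any `s < 1` with `a s + b ≤ s²` then bounds them geometrically, `dₙ ≤ C sⁿ`, so the orbit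
is Cauchy; its limit is fixed by continuity. Two fixed points `x, y` satisfy
`d(x, y) ≤ (a + b) d(x, y)`, hence coincide. -/

open Filter Function

theorem le_mul_pow_of_le_mul_add_mul {d : ℕ → ℝ} {a b s : ℝ} (ha : 0 ≤ a) (hb : 0 ≤ b)
    (hs : 0 < s) (hrate : a * s + b ≤ s ^ 2) (hd₀ : 0 ≤ d 0)
    (hrec : ∀ n, d (n + 2) ≤ a * d (n + 1) + b * d n) (n : ℕ) :
    d n ≤ max (d 0) (d 1 / s) * s ^ n := by
  set M := max (d 0) (d 1 / s)
  have hM : 0 ≤ M := hd₀.trans (le_max_left _ _)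
  suffices ∀ n, d n ≤ M * s ^ n ∧ d (n + 1) ≤ M * s ^ (n + 1) from (this n).1
  intro n
  induction n with
  | zero =>
    refine ⟨by simpa only [pow_zero, mul_one] using le_max_left (d 0) (d 1 / s), ?_⟩
    simpa only [zero_add, pow_one, ← div_le_iff₀ hs] using le_max_right (d 0) (d 1 / s)
  | succ n ih =>
    refine ⟨ih.2, ?_⟩
    calc d (n + 2) ≤ a * d (n + 1) + b * d n := hrec n
      _ ≤ a * (M * s ^ (n + 1)) + b * (M * s ^ n) := by gcongr; exacts [ih.2, ih.1]
      _ = M * s ^ n * (a * s + b) := by ring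
      _ ≤ M * s ^ n * s ^ 2 := by gcongr
      _ = M * s ^ (n + 2) := by ring

section ConvexContractiveWith

variable {X : Type*} [MetricSpace X] {f : X → X} {a b : ℝ}

def ConvexContractiveWith (a b : ℝ) (f : X → X) : Prop :=
  ∀ x y, dist (f (f x)) (f (f y)) ≤ a * dist (f x) (f y) + b * dist x y

theorem ConvexContractiveWith.dist_iterate_succ_le (hcc : ConvexContractiveWith a b f)
    (x : X) (n : ℕ) :
    dist (f^[n + 2] x) (f^[n + 2 + 1] x) ≤
      a * dist (f^[n + 1] x) (f^[n + 1 + 1] x) + b * dist (f^[n] x) (f^[n + 1] x) := by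
  simpa only [iterate_succ_apply'] using hcc (f^[n] x) (f^[n + 1] x)

theorem ConvexContractiveWith.cauchySeq_iterate (hcc : ConvexContractiveWith a b f)
    (ha : 0 ≤ a) (hb : 0 ≤ b) (hab : a + b < 1) (x : X) :
    CauchySeq fun n ↦ f^[n] x := by
  -- for the midpoint `s` of `a + b` and `1`, `s² - (a s + b) = (1 - s) (s - b)`
  set s := (1 + (a + b)) / 2 with hs_def
  have hs : 0 < s := by positivity
  have hs₁ : s < 1 := by linarith
  have hrate : a * s + b ≤ s ^ 2 := by
    nlinarith [mul_nonneg (sub_nonneg.2 hs₁.le) (by linarith : 0 ≤ s - b)]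
  exact cauchySeq_of_le_geometric s _ hs₁
    (le_mul_pow_of_le_mul_add_mul ha hb hs hrate dist_nonneg (hcc.dist_iterate_succ_le x))

theorem ConvexContractiveWith.eq_of_isFixedPt (hcc : ConvexContractiveWith a b f)
    (hab : a + b < 1) {x y : X} (hx : IsFixedPt f x) (hy : IsFixedPt f y) : x = y := by
  have h := hcc x y
  simp only [hx.eq, hy.eq] at h
  exact dist_le_zero.mp (by nlinarith [dist_nonneg (x := x) (y := y)])

end ConvexContractiveWith

/-- Every convex contraction on a nonempty complete metric space has a
unique fixed point. -/
theorem convex_contraction_fixed_point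
    {X : Type*} [MetricSpace X] [CompleteSpace X] [Nonempty X]
    (f : X → X) (hf : Continuous f)
    (a b : ℝ) (ha : a ∈ Set.Ioo (0 : ℝ) 1) (hb : b ∈ Set.Ioo (0 : ℝ) 1)
    (hab : a + b < 1)
    (hcc : ∀ x y : X, dist (f (f x)) (f (f y)) ≤ a * dist (f x) (f y) + b * dist x y) :
    ∃! x : X, f x = x := by
  obtain ⟨x₀⟩ := ‹Nonempty X›
  have hconv : ConvexContractiveWith a b f := hcc
  obtain ⟨x, hx⟩ :=
    cauchySeq_tendsto_of_complete (hconv.cauchySeq_iterate ha.1.le hb.1.le hab x₀)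
  have hfix : IsFixedPt f x := isFixedPt_of_tendsto_iterate hx hf.continuousAt
  exact ⟨x, hfix, fun y hy ↦ hconv.eq_of_isFixedPt hab hy hfix⟩
end

section
/- If f : X → X is a convex contraction on a complete metric space (X,d) with unique fixed point x*, then for every x ∈ X the sequence of Picard iterates f^[n](x) converges to x*. -/
/-!
Along the orbit of `x`, the distances `uₙ = d(fⁿ x, x*)` satisfy the two-step recursion
`uₙ₊₂ ≤ a uₙ₊₁ + b uₙ` (apply the convex contraction inequality to `fⁿ x` and `x*`).
Any nonnegative solution of this recursion with `a + b < 1` is bounded by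
`(a + b)^⌊n/2⌋ · max u₀ u₁`, hence tends to `0`.
-/

open Filter Topology

section TwoStepRecursion

variable {u : ℕ → ℝ} {a b : ℝ}

theorem le_pow_div_two_mul_max_of_le_add (ha : 0 ≤ a) (hb : 0 ≤ b) (hab : a + b ≤ 1)
    (hu : ∀ n, 0 ≤ u n) (hrec : ∀ n, u (n + 2) ≤ a * u (n + 1) + b * u n) (n : ℕ) :
    u n ≤ (a + b) ^ (n / 2) * max (u 0) (u 1) := by
  set M := max (u 0) (u 1)
  have hM : 0 ≤ M := (hu 0).trans (le_max_left _ _)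
  induction n using Nat.twoStepInduction with
  | zero => simp [M]
  | one => simp [M]
  | more n ih₀ ih₁ =>
    have hpow : (a + b) ^ ((n + 1) / 2) ≤ (a + b) ^ (n / 2) :=
      pow_le_pow_of_le_one (by positivity) hab (by omega)
    calc u (n + 2)
        ≤ a * u (n + 1) + b * u n := hrec n
      _ ≤ a * ((a + b) ^ (n / 2) * M) + b * ((a + b) ^ (n / 2) * M) := by
          gcongr
          exact ih₁.trans (mul_le_mul_of_nonneg_right hpow hM)
      _ = (a + b) ^ ((n + 2) / 2) * M := by
          rw [show (n + 2) / 2 = n / 2 + 1 by omega, pow_succ]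
          ring

theorem tendsto_zero_of_two_step_le (ha : 0 ≤ a) (hb : 0 ≤ b) (hab : a + b < 1)
    (hu : ∀ n, 0 ≤ u n) (hrec : ∀ n, u (n + 2) ≤ a * u (n + 1) + b * u n) :
    Tendsto u atTop (𝓝 0) := by
  have hpow : Tendsto (fun n : ℕ => (a + b) ^ (n / 2)) atTop (𝓝 0) :=
    (tendsto_pow_atTop_nhds_zero_of_lt_one (by positivity) hab).comp
      (Nat.tendsto_div_const_atTop two_ne_zero)
  have hbound : Tendsto (fun n : ℕ => (a + b) ^ (n / 2) * max (u 0) (u 1)) atTop (𝓝 0) := by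
    simpa using hpow.mul_const (max (u 0) (u 1))
  exact squeeze_zero hu (le_pow_div_two_mul_max_of_le_add ha hb hab.le hu hrec) hbound

end TwoStepRecursion

theorem dist_iterate_add_two_le_of_isFixedPt {X : Type*} [PseudoMetricSpace X] {f : X → X}
    {a b : ℝ} (hcc : ∀ x y : X, dist (f (f x)) (f (f y)) ≤ a * dist (f x) (f y) + b * dist x y)
    {xstar : X} (hfix : Function.IsFixedPt f xstar) (x : X) (n : ℕ) :
    dist (f^[n + 2] x) xstar ≤ a * dist (f^[n + 1] x) xstar + b * dist (f^[n] x) xstar := by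
  simpa [Function.iterate_succ_apply', hfix.eq] using hcc (f^[n] x) xstar

theorem convex_contraction_picard_tendsto_general
    {X : Type*} [MetricSpace X]
    (f : X → X)
    (a b : ℝ) (ha : a ∈ Set.Ioo (0 : ℝ) 1) (hb : b ∈ Set.Ioo (0 : ℝ) 1)
    (hab : a + b < 1)
    (hcc : ∀ x y : X, dist (f (f x)) (f (f y)) ≤ a * dist (f x) (f y) + b * dist x y)
    (xstar : X) (hfix : f xstar = xstar) :
    ∀ x : X, Filter.Tendsto (fun n : ℕ => f^[n] x) Filter.atTop (nhds xstar) := by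
  intro x
  rw [tendsto_iff_dist_tendsto_zero]
  exact tendsto_zero_of_two_step_le ha.1.le hb.1.le hab (fun _ => dist_nonneg)
    (dist_iterate_add_two_le_of_isFixedPt hcc hfix x)

/-- Picard iterates of a convex contraction converge to its unique fixed point. -/
theorem convex_contraction_picard_tendsto
    {X : Type*} [MetricSpace X] [CompleteSpace X] [Nonempty X]
    (f : X → X) (hf : Continuous f)
    (a b : ℝ) (ha : a ∈ Set.Ioo (0 : ℝ) 1) (hb : b ∈ Set.Ioo (0 : ℝ) 1)
    (hab : a + b < 1)
    (hcc : ∀ x y : X, dist (f (f x)) (f (f y)) ≤ a * dist (f x) (f y) + b * dist x y)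
    (xstar : X) (hfix : f xstar = xstar)
    (huniq : ∀ y : X, f y = y → y = xstar) :
    ∀ x : X, Filter.Tendsto (fun n : ℕ => f^[n] x) Filter.atTop (nhds xstar) :=
  convex_contraction_picard_tendsto_general f a b ha hb hab hcc xstar hfix
end

section
/- For a convex contraction f on a metric space, the sequence y_n = max{d(f^[n-1](x), f^[n](x)), d(f^[n](x), f^[n+1](x))} satisfies y_{n+2} ≤ d·y_n for every n ≥ 1, where d = a + b < 1; consequently the sequence (f^[n](x)) is Cauchy. -/
/-!
Writing `dₙ = dist (f^[n] x) (f^[n+1] x)`, the convex contraction condition applied to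
`f^[n] x, f^[n+1] x` gives the linear recurrence `dₙ₊₂ ≤ a dₙ₊₁ + b dₙ`, from which the maximum of
two consecutive terms shrinks by the factor `a + b` every two steps. Hence the even and the odd
subsequences of `d` are dominated by geometric sequences, `d` is summable, and the orbit is Cauchy.
-/

open Function

section TwoStepRecurrence

variable {u : ℕ → ℝ} {r : ℝ}

theorem le_pow_mul_of_add_two_le (hr : 0 ≤ r) (h : ∀ n, u (n + 2) ≤ r * u n) (k i : ℕ) :
    u (2 * k + i) ≤ r ^ k * u i := by
  induction k with
  | zero => simp
  | succ k ih =>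
    calc u (2 * (k + 1) + i) = u (2 * k + i + 2) := by ring_nf
      _ ≤ r * u (2 * k + i) := h _
      _ ≤ r * (r ^ k * u i) := by gcongr
      _ = r ^ (k + 1) * u i := by ring

theorem summable_of_add_two_le_mul (hu : ∀ n, 0 ≤ u n) (hr₀ : 0 ≤ r) (hr₁ : r < 1)
    (h : ∀ n, u (n + 2) ≤ r * u n) : Summable u := by
  have hgeom (i : ℕ) : Summable fun k ↦ u (2 * k + i) :=
    .of_nonneg_of_le (fun _ ↦ hu _) (le_pow_mul_of_add_two_le hr₀ h · i)
      ((summable_geometric_of_lt_one hr₀ hr₁).mul_right (u i))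
  exact .even_add_odd (hgeom 0) (hgeom 1)

end TwoStepRecurrence

theorem max_add_two_le_of_recurrence {d : ℕ → ℝ} {a b : ℝ} (hd : ∀ n, 0 ≤ d n)
    (ha : 0 ≤ a) (hb : 0 ≤ b) (hab : a + b ≤ 1)
    (hrec : ∀ n, d (n + 2) ≤ a * d (n + 1) + b * d n) (n : ℕ) :
    max (d (n + 2)) (d (n + 3)) ≤ (a + b) * max (d n) (d (n + 1)) := by
  set y := max (d n) (d (n + 1))
  have hy : 0 ≤ y := (hd n).trans (le_max_left _ _)
  have h₂ : d (n + 2) ≤ (a + b) * y :=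
    calc d (n + 2) ≤ a * d (n + 1) + b * d n := hrec n
      _ ≤ a * y + b * y := by gcongr; exacts [le_max_right _ _, le_max_left _ _]
      _ = (a + b) * y := by ring
  have h₃ : d (n + 3) ≤ (a + b) * y :=
    calc d (n + 3) ≤ a * d (n + 2) + b * d (n + 1) := hrec (n + 1)
      _ ≤ a * ((a + b) * y) + b * y := by gcongr; exact le_max_right _ _
      _ ≤ a * y + b * y := by gcongr; exact mul_le_of_le_one_left hy hab
      _ = (a + b) * y := by ring
  exact max_le h₂ h₃

theorem dist_iterate_add_two_le {X : Type*} [PseudoMetricSpace X] {f : X → X} {a b : ℝ}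
    (hcc : ∀ u v : X, dist (f (f u)) (f (f v)) ≤ a * dist (f u) (f v) + b * dist u v)
    (x : X) (n : ℕ) :
    dist (f^[n + 2] x) (f^[n + 2 + 1] x) ≤
      a * dist (f^[n + 1] x) (f^[n + 1 + 1] x) + b * dist (f^[n] x) (f^[n + 1] x) := by
  simpa only [iterate_succ_apply'] using hcc (f^[n] x) (f^[n + 1] x)

/-- For a convex contraction, the sequence
`y n = max (dist (f^[n-1] x) (f^[n] x)) (dist (f^[n] x) (f^[n+1] x))`
satisfies `y (n+2) ≤ (a+b) * y n` for `n ≥ 1`, and the Picard iterates form a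
Cauchy sequence. -/
theorem convex_contraction_y_seq_and_cauchy
    {X : Type*} [MetricSpace X]
    (f : X → X) (a b : ℝ) (ha : 0 ≤ a) (hb : 0 ≤ b) (hab : a + b < 1)
    (hcc : ∀ u v : X, dist (f (f u)) (f (f v)) ≤ a * dist (f u) (f v) + b * dist u v)
    (x : X) :
    (∀ n : ℕ, 1 ≤ n →
      max (dist (f^[(n + 2) - 1] x) (f^[n + 2] x)) (dist (f^[n + 2] x) (f^[(n + 2) + 1] x))
        ≤ (a + b) *
          max (dist (f^[n - 1] x) (f^[n] x)) (dist (f^[n] x) (f^[n + 1] x))) ∧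
    CauchySeq (fun n : ℕ => f^[n] x) := by
  set d : ℕ → ℝ := fun n ↦ dist (f^[n] x) (f^[n + 1] x)
  have hd (n : ℕ) : 0 ≤ d n := dist_nonneg
  have hy := max_add_two_le_of_recurrence hd ha hb hab.le (dist_iterate_add_two_le hcc x)
  refine ⟨fun n hn ↦ ?_, ?_⟩
  · obtain ⟨m, rfl⟩ := Nat.exists_eq_add_of_le' hn
    -- `m + 1 + 2 - 1` and `m + 1 - 1` reduce to `m + 2` and `m` by `rfl`
    exact hy m
  · have hsum : Summable fun n ↦ max (d n) (d (n + 1)) :=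
      summable_of_add_two_le_mul (fun n ↦ (hd n).trans (le_max_left _ _)) (by positivity) hab hy
    exact cauchySeq_of_summable_dist (hsum.of_nonneg_of_le hd fun n ↦ le_max_left _ _)
end

section
/- There exists a continuous map f : ℝ → ℝ (with the usual metric) that is a convex contraction but not a contraction; i.e., there exist a, b ∈ (0,1) with a + b < 1 and |f(f(x)) − f(f(y))| ≤ a·|f(x) − f(y)| + b·|x − y| for all x,y, yet there is no constant c < 1 with |f(x) − f(y)| ≤ c·|x − y| for all x, y. -/
/-!
Take `f x = 1 + max 0 (min x 1)`. It maps `ℝ` into `[1, 2]`, where it is constantly `2`, so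
`f ∘ f` is constant and the convex contraction inequality holds for any `a, b ≥ 0`. But `f` is a
translation on `[0, 1]`, so it has Lipschitz constant exactly `1`.
-/

section

variable {X : Type*} [PseudoMetricSpace X] {f : X → X}

theorem dist_iterate_two_le_of_comp_self_const {c : X} (hf : ∀ x, f (f x) = c) {a b : ℝ}
    (ha : 0 ≤ a) (hb : 0 ≤ b) (x y : X) :
    dist (f (f x)) (f (f y)) ≤ a * dist (f x) (f y) + b * dist x y := by
  rw [hf x, hf y, dist_self]
  positivity

theorem not_exists_lt_one_dist_le_of_dist_eq {x y : X} (hxy : 0 < dist x y)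
    (hf : dist (f x) (f y) = dist x y) :
    ¬ ∃ c : ℝ, 0 ≤ c ∧ c < 1 ∧ ∀ x y, dist (f x) (f y) ≤ c * dist x y := by
  rintro ⟨c, -, hc, hle⟩
  have := hle x y
  rw [hf] at this
  nlinarith

end

noncomputable def shiftedClamp (x : ℝ) : ℝ := 1 + max 0 (min x 1)

theorem continuous_shiftedClamp : Continuous shiftedClamp := by
  unfold shiftedClamp
  fun_prop

theorem shiftedClamp_of_one_le {x : ℝ} (hx : 1 ≤ x) : shiftedClamp x = 2 := by
  rw [shiftedClamp, min_eq_right hx, max_eq_right zero_le_one]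
  norm_num

theorem one_le_shiftedClamp (x : ℝ) : 1 ≤ shiftedClamp x := by
  unfold shiftedClamp
  linarith [le_max_left (0 : ℝ) (min x 1)]

theorem shiftedClamp_shiftedClamp (x : ℝ) : shiftedClamp (shiftedClamp x) = 2 :=
  shiftedClamp_of_one_le (one_le_shiftedClamp x)

theorem dist_shiftedClamp_zero_one :
    dist (shiftedClamp 0) (shiftedClamp 1) = dist (0 : ℝ) 1 := by
  rw [Real.dist_eq, Real.dist_eq, shiftedClamp_of_one_le le_rfl]
  norm_num [shiftedClamp]

/-- There is a continuous self-map of `ℝ` which is a convex contraction but not a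
contraction. -/
theorem exists_convex_contraction_not_contraction :
    ∃ f : ℝ → ℝ, Continuous f ∧
      (∃ a b : ℝ, a ∈ Set.Ioo (0 : ℝ) 1 ∧ b ∈ Set.Ioo (0 : ℝ) 1 ∧ a + b < 1 ∧
        ∀ x y : ℝ, |f (f x) - f (f y)| ≤ a * |f x - f y| + b * |x - y|) ∧
      ¬ ∃ c : ℝ, 0 ≤ c ∧ c < 1 ∧ ∀ x y : ℝ, |f x - f y| ≤ c * |x - y| := by
  refine ⟨shiftedClamp, continuous_shiftedClamp, ?_, ?_⟩
  · refine ⟨1 / 4, 1 / 4, by norm_num, by norm_num, by norm_num, fun x y => ?_⟩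
    simpa only [Real.dist_eq] using
      dist_iterate_two_le_of_comp_self_const shiftedClamp_shiftedClamp
        (by norm_num : (0 : ℝ) ≤ 1 / 4) (by norm_num : (0 : ℝ) ≤ 1 / 4) x y
  · simpa only [Real.dist_eq] using
      not_exists_lt_one_dist_le_of_dist_eq
        (by norm_num [Real.dist_eq] : 0 < dist (0 : ℝ) 1) dist_shiftedClamp_zero_one
end

section
/- Let S = ((X,d), (f_i)_{i∈I}) be an iterated function system consisting of convex contractions on a nonempty complete metric space with I finite and nonempty. Then there exists a unique nonempty compact set A ⊆ X such that for every nonempty compact B ⊆ X, the iterates F_S^[n](B) converge to A in the Hausdorff metric, where F_S(B) = ⋃_{i∈I} f_i(B). -/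
/-!
Call the compositions `f i₁ ∘ ⋯ ∘ f iₙ` word maps of length `n`. A word map of length `n + 2` is
`f i ∘ f j ∘ h` with `h` of length `n`, so the convex-contraction inequality bounds the largest
spread `edist (g x) (g y)` over words of length `n + 2` by `q` times the larger of the spreads at
lengths `n + 1` and `n`, where `q < 1` dominates every `a i j + b i j + c i j`. Hence the spread
decays like `(√q) ^ n`. Since `F^[n] B` is the union of the images of `B` under the word maps of
length `n`, the Hausdorff distance between `F^[n] B` and `F^[n] C` decays geometrically. So in the
complete space of nonempty compact sets every orbit of `F` is Cauchy, and all orbits share one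
limit.
-/

open Set Filter Topology ENNReal Metric TopologicalSpace

theorem Function.existsUnique_tendsto_iterate_of_edist_le_geometric {Y : Type*} [EMetricSpace Y]
    [CompleteSpace Y] [Nonempty Y] {T : Y → Y} {ρ : ℝ≥0∞} (hρ : ρ < 1)
    (h : ∀ y z, ∃ K ≠ ∞, ∀ n, edist (T^[n] y) (T^[n] z) ≤ K * ρ ^ n) :
    ∃! A, ∀ y, Tendsto (fun n => T^[n] y) atTop (𝓝 A) := by
  have hclose : ∀ y z, Tendsto (fun n => edist (T^[n] y) (T^[n] z)) atTop (𝓝 0) := by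
    intro y z
    obtain ⟨K, hK, hyz⟩ := h y z
    have hgeom : Tendsto (fun n => K * ρ ^ n) atTop (𝓝 0) := by
      simpa using ENNReal.Tendsto.const_mul (ENNReal.tendsto_pow_atTop_nhds_zero_of_lt_one hρ)
        (Or.inr hK)
    exact tendsto_of_tendsto_of_tendsto_of_le_of_le tendsto_const_nhds hgeom (fun _ => zero_le)
      hyz
  obtain ⟨y₀⟩ := ‹Nonempty Y›
  obtain ⟨K, hK, hy₀⟩ := h y₀ (T y₀)
  have hcauchy : CauchySeq fun n => T^[n] y₀ :=
    cauchySeq_of_edist_le_geometric ρ K hρ hK fun n => by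
      simpa only [Function.iterate_succ_apply] using hy₀ n
  obtain ⟨A, hA⟩ := cauchySeq_tendsto_of_complete hcauchy
  refine ⟨A, fun y => ?_, fun A' hA' => tendsto_nhds_unique (hA' y₀) hA⟩
  rw [tendsto_iff_edist_tendsto_0] at hA ⊢
  have hsum := (hclose y y₀).add hA
  rw [add_zero] at hsum
  exact tendsto_of_tendsto_of_tendsto_of_le_of_le tendsto_const_nhds hsum (fun _ => zero_le)
    fun n => edist_triangle _ _ _

theorem ENNReal.le_mul_pow_of_le_sq_mul_max {u : ℕ → ℝ≥0∞} {C r : ℝ≥0∞} (hr : r ≤ 1)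
    (h0 : u 0 ≤ C) (h1 : u 1 ≤ C * r) (h : ∀ n, u (n + 2) ≤ r ^ 2 * max (u (n + 1)) (u n))
    (n : ℕ) : u n ≤ C * r ^ n := by
  suffices ∀ n, u n ≤ C * r ^ n ∧ u (n + 1) ≤ C * r ^ (n + 1) from (this n).1
  intro n
  induction n with
  | zero => simpa using ⟨h0, h1⟩
  | succ n ih =>
    refine ⟨ih.2, ?_⟩
    calc u (n + 2) ≤ r ^ 2 * max (u (n + 1)) (u n) := h n
      _ ≤ r ^ 2 * (C * r ^ n) := by
        gcongr
        refine max_le (ih.2.trans ?_) ih.1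
        gcongr C * ?_
        exact pow_le_pow_right_of_le_one' hr n.le_succ
      _ = C * r ^ (n + 1 + 1) := by ring

theorem Metric.hausdorffEDist_biUnion_image_le {X Y : Type*} [PseudoEMetricSpace Y]
    {G : Set (X → Y)} {B C : Set X} (hB : B.Nonempty) (hC : C.Nonempty) {e : ℝ≥0∞}
    (h : ∀ g ∈ G, ∀ x ∈ B, ∀ y ∈ C, edist (g x) (g y) ≤ e) :
    hausdorffEDist (⋃ g ∈ G, g '' B) (⋃ g ∈ G, g '' C) ≤ e := by
  refine hausdorffEDist_le_of_mem_edist ?_ ?_ <;> simp only [mem_iUnion₂, mem_image] <;>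
    rintro _ ⟨g, hg, x, hx, rfl⟩
  · obtain ⟨y, hy⟩ := hC
    exact ⟨g y, ⟨g, hg, y, hy, rfl⟩, h g hg x hx y hy⟩
  · obtain ⟨y, hy⟩ := hB
    exact ⟨g y, ⟨g, hg, y, hy, rfl⟩, edist_comm (g x) _ ▸ h g hg y hy x hx⟩

section IteratedFunctionSystem

variable {X I : Type*}

def hutchinson (f : I → X → X) (B : Set X) : Set X :=
  ⋃ i, f i '' B

def wordMaps (f : I → X → X) : ℕ → Set (X → X)
  | 0 => {id}
  | n + 1 => ⋃ i, (f i ∘ ·) '' wordMaps f n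

theorem comp_mem_wordMaps_succ {f : I → X → X} {n : ℕ} {g : X → X} (hg : g ∈ wordMaps f n)
    (i : I) : f i ∘ g ∈ wordMaps f (n + 1) :=
  mem_iUnion.2 ⟨i, mem_image_of_mem _ hg⟩

theorem iterate_hutchinson_eq_biUnion (f : I → X → X) (n : ℕ) (B : Set X) :
    (hutchinson f)^[n] B = ⋃ g ∈ wordMaps f n, g '' B := by
  induction n with
  | zero => simp [wordMaps]
  | succ n ih =>
    rw [Function.iterate_succ_apply', ih]
    simp only [hutchinson, wordMaps, image_iUnion₂, biUnion_iUnion, biUnion_image, image_comp]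

section PseudoEMetricSpace

variable [PseudoEMetricSpace X]

noncomputable def wordEDist (f : I → X → X) (n : ℕ) (x y : X) : ℝ≥0∞ :=
  ⨆ g ∈ wordMaps f n, edist (g x) (g y)

theorem edist_le_wordEDist {f : I → X → X} {n : ℕ} {g : X → X} (hg : g ∈ wordMaps f n)
    (x y : X) : edist (g x) (g y) ≤ wordEDist f n x y :=
  le_iSup₂ (f := fun g _ => edist (g x) (g y)) g hg

/-- The convex-contraction inequality in max form, with one constant `q` for all pairs `i j`. -/
def ConvexContractingWith (q : ℝ≥0∞) (f : I → X → X) : Prop :=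
  ∀ i j x y, edist (f i (f j x)) (f i (f j y)) ≤
    q * max (edist x y) (max (edist (f i x) (f i y)) (edist (f j x) (f j y)))

namespace ConvexContractingWith

variable {f : I → X → X} {ρ : ℝ≥0∞}

theorem wordEDist_add_two_le (hf : ConvexContractingWith (ρ ^ 2) f) (n : ℕ) (x y : X) :
    wordEDist f (n + 2) x y ≤ ρ ^ 2 * max (wordEDist f (n + 1) x y) (wordEDist f n x y) := by
  refine iSup₂_le fun g hg => ?_
  simp only [wordMaps, mem_iUnion, mem_image] at hg
  obtain ⟨i, _, ⟨j, h, hh, rfl⟩, rfl⟩ := hg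
  calc edist (f i (f j (h x))) (f i (f j (h y)))
      ≤ ρ ^ 2 * max (edist (h x) (h y)) (max (edist (f i (h x)) (f i (h y)))
          (edist (f j (h x)) (f j (h y)))) := hf i j (h x) (h y)
    _ ≤ ρ ^ 2 * max (wordEDist f (n + 1) x y) (wordEDist f n x y) := by
      gcongr ρ ^ 2 * ?_
      exact max_le (le_max_of_le_right (edist_le_wordEDist hh x y))
        (max_le (le_max_of_le_left (edist_le_wordEDist (comp_mem_wordMaps_succ hh i) x y))
          (le_max_of_le_left (edist_le_wordEDist (comp_mem_wordMaps_succ hh j) x y)))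

theorem wordEDist_le_mul_pow (hf : ConvexContractingWith (ρ ^ 2) f) (hρ : ρ ≤ 1) {x y : X}
    {K : ℝ≥0∞} (h0 : edist x y ≤ K) (h1 : ∀ i, edist (f i x) (f i y) ≤ K * ρ) (n : ℕ) :
    wordEDist f n x y ≤ K * ρ ^ n := by
  refine ENNReal.le_mul_pow_of_le_sq_mul_max (u := (wordEDist f · x y)) hρ ?_ ?_
    (hf.wordEDist_add_two_le · x y) n
  · simpa [wordEDist, wordMaps] using h0
  · simpa [wordEDist, wordMaps] using h1

theorem hausdorffEDist_iterate_hutchinson_le (hf : ConvexContractingWith (ρ ^ 2) f)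
    (hρ : ρ ≤ 1) {B C : Set X} (hB : B.Nonempty) (hC : C.Nonempty) {K : ℝ≥0∞}
    (h0 : ∀ x ∈ B, ∀ y ∈ C, edist x y ≤ K)
    (h1 : ∀ i, ∀ x ∈ B, ∀ y ∈ C, edist (f i x) (f i y) ≤ K * ρ)
    (n : ℕ) : hausdorffEDist ((hutchinson f)^[n] B) ((hutchinson f)^[n] C) ≤ K * ρ ^ n := by
  rw [iterate_hutchinson_eq_biUnion, iterate_hutchinson_eq_biUnion]
  exact hausdorffEDist_biUnion_image_le hB hC fun g hg x hx y hy =>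
    (edist_le_wordEDist hg x y).trans
      (hf.wordEDist_le_mul_pow hρ (h0 x hx y hy) (fun i => h1 i x hx y hy) n)

end ConvexContractingWith

end PseudoEMetricSpace

theorem mul_add_mul_add_mul_le_mul_max {a b c u v w : ℝ} (ha : 0 ≤ a) (hb : 0 ≤ b)
    (hc : 0 ≤ c) :
    a * u + b * v + c * w ≤ (a + b + c) * max u (max v w) := by
  have hu : u ≤ max u (max v w) := le_max_left _ _
  have hv : v ≤ max u (max v w) := le_max_of_le_right (le_max_left _ _)
  have hw : w ≤ max u (max v w) := le_max_of_le_right (le_max_right _ _)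
  nlinarith [mul_le_mul_of_nonneg_left hu ha, mul_le_mul_of_nonneg_left hv hb,
    mul_le_mul_of_nonneg_left hw hc]

theorem ConvexContractingWith.of_dist_le [PseudoMetricSpace X] {f : I → X → X} {q : ℝ}
    (h : ∀ i j x y, dist (f i (f j x)) (f i (f j y)) ≤
      q * max (dist x y) (max (dist (f i x) (f i y)) (dist (f j x) (f j y)))) :
    ConvexContractingWith (ENNReal.ofReal q) f := fun i j x y => by
  simp only [edist_dist, ← ofReal_max]
  rw [← ofReal_mul' (le_max_of_le_left dist_nonneg)]
  exact ofReal_le_ofReal (h i j x y)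

theorem exists_convexContractingWith_sq [PseudoMetricSpace X] [Finite I] [Nonempty I]
    {f : I → X → X} {a b c : I → I → ℝ}
    (ha : ∀ i j, 0 ≤ a i j) (hb : ∀ i j, 0 ≤ b i j) (hc : ∀ i j, 0 ≤ c i j)
    (hd : ∀ i j, a i j + b i j + c i j < 1)
    (hcc : ∀ i j (x y : X),
      dist (f i (f j x)) (f i (f j y)) ≤
        a i j * dist x y + b i j * dist (f i x) (f i y) + c i j * dist (f j x) (f j y)) :
    ∃ ρ : ℝ≥0∞, ρ ≠ 0 ∧ ρ < 1 ∧ ConvexContractingWith (ρ ^ 2) f := by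
  obtain ⟨p, hp⟩ := Finite.exists_max fun p : I × I => a p.1 p.2 + b p.1 p.2 + c p.1 p.2
  set q := a p.1 p.2 + b p.1 p.2 + c p.1 p.2
  have hq0 : 0 ≤ q := add_nonneg (add_nonneg (ha _ _) (hb _ _)) (hc _ _)
  have hq1 : q < 1 := hd _ _
  -- AM-GM: `√q ≤ (1 + q) / 2 < 1`
  have hsq : q ≤ ((1 + q) / 2) ^ 2 := by nlinarith [sq_nonneg (1 - q)]
  refine ⟨ENNReal.ofReal ((1 + q) / 2), (ofReal_pos.2 (by linarith)).ne',
    ofReal_lt_one.2 (by linarith), ?_⟩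
  rw [← ofReal_pow (by linarith)]
  refine ConvexContractingWith.of_dist_le fun i j x y => (hcc i j x y).trans ?_
  calc _ ≤ (a i j + b i j + c i j) *
          max (dist x y) (max (dist (f i x) (f i y)) (dist (f j x) (f j y))) :=
        mul_add_mul_add_mul_le_mul_max (ha i j) (hb i j) (hc i j)
    _ ≤ _ := mul_le_mul_of_nonneg_right ((hp (i, j)).trans hsq) (le_max_of_le_left dist_nonneg)

theorem IsCompact.hutchinson [TopologicalSpace X] [Finite I] {f : I → X → X}
    (hf : ∀ i, Continuous (f i)) {B : Set X} (hB : IsCompact B) : IsCompact (hutchinson f B) :=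
  isCompact_iUnion fun i => hB.image (hf i)

namespace TopologicalSpace.NonemptyCompacts

def hutchinson [TopologicalSpace X] [Finite I] [Nonempty I] {f : I → X → X}
    (hf : ∀ i, Continuous (f i)) (K : NonemptyCompacts X) : NonemptyCompacts X where
  carrier := _root_.hutchinson f K
  isCompact' := K.isCompact.hutchinson hf
  nonempty' := nonempty_iUnion.2 ⟨Classical.arbitrary I, K.nonempty.image _⟩

theorem coe_iterate_hutchinson [TopologicalSpace X] [Finite I] [Nonempty I] {f : I → X → X}
    (hf : ∀ i, Continuous (f i)) (n : ℕ) (K : NonemptyCompacts X) :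
    ((hutchinson hf)^[n] K : Set X) = (_root_.hutchinson f)^[n] K :=
  Function.Semiconj.iterate_right (f := ((↑) : NonemptyCompacts X → Set X)) (fun _ => rfl) n K

theorem edist_iterate_hutchinson_le_geometric [MetricSpace X] [Finite I] [Nonempty I]
    {f : I → X → X} (hf : ∀ i, Continuous (f i)) {ρ : ℝ≥0∞} (hfρ : ConvexContractingWith (ρ ^ 2) f)
    (hρ0 : ρ ≠ 0) (hρ1 : ρ ≤ 1) (K L : NonemptyCompacts X) :
    ∃ D ≠ ∞, ∀ n, edist ((hutchinson hf)^[n] K) ((hutchinson hf)^[n] L) ≤ D * ρ ^ n := by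
  set S : Set X := K ∪ L
  have hS : IsCompact S := K.isCompact.union L.isCompact
  set E := max (ediam S) (ediam (_root_.hutchinson f S))
  have hE : E ≠ ∞ :=
    max_ne_top hS.isBounded.ediam_ne_top (hS.hutchinson hf).isBounded.ediam_ne_top
  refine ⟨E * ρ⁻¹, mul_ne_top hE (inv_ne_top.2 hρ0), fun n => ?_⟩
  have h0 : ∀ x ∈ (K : Set X), ∀ y ∈ (L : Set X), edist x y ≤ E * ρ⁻¹ := fun x hx y hy =>
    calc edist x y ≤ ediam S := edist_le_ediam_of_mem (Or.inl hx) (Or.inr hy)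
      _ ≤ E := le_max_left _ _
      _ ≤ E * ρ⁻¹ := le_mul_of_one_le_right' (ENNReal.one_le_inv.2 hρ1)
  have h1 : ∀ i, ∀ x ∈ (K : Set X), ∀ y ∈ (L : Set X), edist (f i x) (f i y) ≤ E * ρ⁻¹ * ρ :=
    fun i x hx y hy =>
    calc edist (f i x) (f i y) ≤ ediam (_root_.hutchinson f S) :=
          edist_le_ediam_of_mem (mem_iUnion_of_mem i (mem_image_of_mem _ (Or.inl hx)))
            (mem_iUnion_of_mem i (mem_image_of_mem _ (Or.inr hy)))
      _ ≤ E := le_max_right _ _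
      _ = E * ρ⁻¹ * ρ := by
        rw [mul_assoc, ENNReal.inv_mul_cancel hρ0 (hρ1.trans_lt one_lt_top).ne, mul_one]
  show hausdorffEDist _ _ ≤ _
  rw [coe_iterate_hutchinson, coe_iterate_hutchinson]
  exact hfρ.hausdorffEDist_iterate_hutchinson_le hρ1 K.nonempty L.nonempty h0 h1 n

theorem tendsto_iterate_hutchinson_iff [EMetricSpace X]
    [Finite I] [Nonempty I] {f : I → X → X} (hf : ∀ i, Continuous (f i))
    (K A : NonemptyCompacts X) :
    Tendsto (fun n => (hutchinson hf)^[n] K) atTop (𝓝 A) ↔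
      Tendsto (fun n => hausdorffEDist ((_root_.hutchinson f)^[n] K) A) atTop (𝓝 0) := by
  rw [tendsto_iff_edist_tendsto_0]
  simp only [← coe_iterate_hutchinson hf]
  rfl

end TopologicalSpace.NonemptyCompacts

end IteratedFunctionSystem

/-- An iterated function system consisting of convex contractions has a unique
attractor, to which the iterates of the associated set function converge from any
nonempty compact set, in the Hausdorff metric. -/
theorem IFS_convex_contractions_attractor
    {X : Type*} [MetricSpace X] [CompleteSpace X] [Nonempty X]
    {I : Type*} [Finite I] [Nonempty I]
    (f : I → X → X) (hf : ∀ i, Continuous (f i))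
    (a b c : I → I → ℝ)
    (ha : ∀ i j, 0 ≤ a i j) (hb : ∀ i j, 0 ≤ b i j) (hc : ∀ i j, 0 ≤ c i j)
    (hd : ∀ i j, a i j + b i j + c i j < 1)
    (hcc : ∀ i j (x y : X),
      dist (f i (f j x)) (f i (f j y)) ≤
        a i j * dist x y + b i j * dist (f i x) (f i y) + c i j * dist (f j x) (f j y)) :
    ∃! A : Set X, A.Nonempty ∧ IsCompact A ∧
      ∀ B : Set X, B.Nonempty → IsCompact B →
        Filter.Tendsto
          (fun n : ℕ => EMetric.hausdorffEdist ((fun C : Set X => ⋃ i, f i '' C)^[n] B) A)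
          Filter.atTop (nhds 0) := by
  obtain ⟨ρ, hρ0, hρ1, hfρ⟩ := exists_convexContractingWith_sq ha hb hc hd hcc
  obtain ⟨A, hA, hA_unique⟩ := Function.existsUnique_tendsto_iterate_of_edist_le_geometric hρ1
    (NonemptyCompacts.edist_iterate_hutchinson_le_geometric hf hfρ hρ0 hρ1.le)
  refine ⟨A, ⟨A.nonempty, A.isCompact, fun B hB hBc =>
    (NonemptyCompacts.tendsto_iterate_hutchinson_iff hf ⟨⟨B, hBc⟩, hB⟩ A).1 (hA _)⟩, ?_⟩
  rintro A' ⟨hA', hA'c, hA'_attracts⟩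
  have hA'_eq : (⟨⟨A', hA'c⟩, hA'⟩ : NonemptyCompacts X) = A := hA_unique _ fun K =>
    (NonemptyCompacts.tendsto_iterate_hutchinson_iff hf K _).2
      (hA'_attracts K K.nonempty K.isCompact)
  exact congrArg SetLike.coe hA'_eq
end

section
/- Let S = ((X,d), (f_i)_{i∈I}) be an iterated function system consisting of convex contractions. The associated set function F_S maps nonempty compact subsets to nonempty compact subsets and has a fixed point A ∈ 𝒦(X); moreover this fixed point is unique: if F_S(A₁) = A₁ for A₁ ∈ 𝒦(X), then A₁ = A. -/
/-!
Write `f_w` for the composite of the maps along a word `w` and choose `β < 1` with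
`a + b + c ≤ β²`. Applying the convex contraction inequality to the first two letters of a word
shows, by induction, that `d(f_w x, f_w y) ≤ β^|w| R` as soon as `x, y` are `R`-close and all
pairs `f_i x, f_i y` are `βR`-close. Hence `f_{ω₀ ⋯ ωₙ₋₁} x₀` converges uniformly in the address
`ω ∈ I^ℕ`, and the image of the continuous limit map on the compact space `I^ℕ` is a compact
fixed set of `F_S`. Conversely, every point of a bounded fixed set `S` is `f_w y` with `y ∈ S` and
`|w|` arbitrary, so it lies within `O(β^|w|)` of `f_w y₀ ∈ T` for any other fixed set `T`.
-/

open Metric Filter Topology Set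

namespace IFS

variable {X I : Type*}

def compWord (f : I → X → X) : List I → X → X
  | [] => id
  | i :: w => f i ∘ compWord f w

@[simp]
lemma compWord_nil (f : I → X → X) (x : X) : compWord f [] x = x := rfl

@[simp]
lemma compWord_cons (f : I → X → X) (i : I) (w : List I) (x : X) :
    compWord f (i :: w) x = f i (compWord f w x) := rfl

lemma compWord_append_singleton (f : I → X → X) (w : List I) (i : I) (x : X) :
    compWord f (w ++ [i]) x = compWord f w (f i x) := by
  induction w with
  | nil => rfl
  | cons j w ih => exact congrArg (f j) ih

lemma compWord_mem {f : I → X → X} {T : Set X} (hT : ∀ i, MapsTo (f i) T T) {y : X}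
    (hy : y ∈ T) (w : List I) : compWord f w y ∈ T := by
  induction w with
  | nil => exact hy
  | cons i w ih => exact hT i ih

lemma exists_compWord_eq_of_subset {f : I → X → X} {S : Set X} (hS : S ⊆ ⋃ i, f i '' S)
    (n : ℕ) {x : X} (hx : x ∈ S) : ∃ w : List I, w.length = n ∧ ∃ y ∈ S, compWord f w y = x := by
  induction n generalizing x with
  | zero => exact ⟨[], rfl, x, hx, rfl⟩
  | succ n ih =>
    obtain ⟨i, z, hz, rfl⟩ := mem_iUnion.1 (hS hx)
    obtain ⟨w, hw, y, hy, rfl⟩ := ih hz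
    exact ⟨i :: w, by simp [hw], y, hy, rfl⟩

lemma mapsTo_of_iUnion_image_eq {f : I → X → X} {S : Set X} (hS : ⋃ i, f i '' S = S) (i : I) :
    MapsTo (f i) S S :=
  mapsTo_iff_image_subset.2 ((subset_iUnion (fun i => f i '' S) i).trans hS.subset)

variable [MetricSpace X]

/-- The paper's condition
`d(f_i f_j x, f_i f_j y) ≤ a d(x,y) + b d(f_i x, f_i y) + c d(f_j x, f_j y)`
implies this one with `q` any bound for `a + b + c`. -/
def IsConvexContractionWith (f : I → X → X) (q : ℝ) : Prop :=
  ∀ i j x y, dist (f i (f j x)) (f i (f j y)) ≤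
    q * max (dist x y) (max (dist (f i x) (f i y)) (dist (f j x) (f j y)))

lemma isConvexContractionWith_of_le {f : I → X → X} {a b c : I → I → ℝ} {q : ℝ}
    (ha : ∀ i j, 0 ≤ a i j) (hb : ∀ i j, 0 ≤ b i j) (hc : ∀ i j, 0 ≤ c i j)
    (hq : ∀ i j, a i j + b i j + c i j ≤ q)
    (hcc : ∀ i j (x y : X),
      dist (f i (f j x)) (f i (f j y)) ≤
        a i j * dist x y + b i j * dist (f i x) (f i y) + c i j * dist (f j x) (f j y)) :
    IsConvexContractionWith f q := by
  intro i j x y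
  set m := max (dist x y) (max (dist (f i x) (f i y)) (dist (f j x) (f j y)))
  have hm : 0 ≤ m := dist_nonneg.trans (le_max_left _ _)
  calc dist (f i (f j x)) (f i (f j y))
      ≤ a i j * dist x y + b i j * dist (f i x) (f i y) + c i j * dist (f j x) (f j y) :=
        hcc i j x y
    _ ≤ (a i j + b i j + c i j) * m := by
        have h₀ : dist x y ≤ m := le_max_left _ _
        have hᵢ : dist (f i x) (f i y) ≤ m := (le_max_left _ _).trans (le_max_right _ _)
        have hⱼ : dist (f j x) (f j y) ≤ m := (le_max_right _ _).trans (le_max_right _ _)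
        nlinarith [mul_le_mul_of_nonneg_left h₀ (ha i j), mul_le_mul_of_nonneg_left hᵢ (hb i j),
          mul_le_mul_of_nonneg_left hⱼ (hc i j)]
    _ ≤ q * m := mul_le_mul_of_nonneg_right (hq i j) hm

lemma exists_pos_lt_one_forall_le_sq {ι : Type*} [Finite ι] (s : ι → ℝ) (hs : ∀ k, s k < 1) :
    ∃ β : ℝ, 0 < β ∧ β < 1 ∧ ∀ k, s k ≤ β ^ 2 := by
  rcases isEmpty_or_nonempty ι with _ | _
  · exact ⟨1 / 2, by norm_num, by norm_num, isEmptyElim⟩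
  obtain ⟨k₀, hk₀⟩ := Finite.exists_max s
  have hr : max (s k₀) 0 < 1 := max_lt (hs k₀) one_pos
  refine ⟨(1 + max (s k₀) 0) / 2, by positivity, by linarith, fun k => ?_⟩
  nlinarith [hk₀ k, le_max_left (s k₀) 0, le_max_right (s k₀) 0, sq_nonneg (1 - max (s k₀) 0)]

section Contraction

variable {f : I → X → X} {β : ℝ}

lemma dist_compWord_le (hcontr : IsConvexContractionWith f (β ^ 2)) (hβ0 : 0 ≤ β)
    (hβ1 : β ≤ 1) {x y : X} {R : ℝ} (hxy : dist x y ≤ R)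
    (hfxy : ∀ i, dist (f i x) (f i y) ≤ β * R) (w : List I) :
    dist (compWord f w x) (compWord f w y) ≤ β ^ w.length * R := by
  have hR : 0 ≤ R := dist_nonneg.trans hxy
  -- strengthen the statement to words `w` and `i :: w` together, to peel off two letters at once
  suffices ∀ w : List I, dist (compWord f w x) (compWord f w y) ≤ β ^ w.length * R ∧
      ∀ i, dist (compWord f (i :: w) x) (compWord f (i :: w) y) ≤ β ^ (w.length + 1) * R from
    (this w).1
  intro w
  induction w with
  | nil => exact ⟨by simpa using hxy, fun i => by simpa using hfxy i⟩
  | cons j w ih =>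
    refine ⟨ih.2 j, fun i => ?_⟩
    have hmono : β ^ (w.length + 1) * R ≤ β ^ w.length * R :=
      mul_le_mul_of_nonneg_right (pow_le_pow_of_le_one hβ0 hβ1 (Nat.le_succ _)) hR
    calc dist (compWord f (i :: j :: w) x) (compWord f (i :: j :: w) y)
        ≤ β ^ 2 * max (dist (compWord f w x) (compWord f w y))
            (max (dist (f i (compWord f w x)) (f i (compWord f w y)))
              (dist (f j (compWord f w x)) (f j (compWord f w y)))) := hcontr i j _ _
      _ ≤ β ^ 2 * (β ^ w.length * R) := by
          gcongr
          exact max_le ih.1 (max_le ((ih.2 i).trans hmono) ((ih.2 j).trans hmono))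
      _ = β ^ (i :: j :: w).length * R := by simp only [List.length_cons]; ring

lemma dist_compWord_le_of_mem (hcontr : IsConvexContractionWith f (β ^ 2)) (hβ0 : 0 < β)
    (hβ1 : β ≤ 1) {K : Set X} (hK : Bornology.IsBounded K) {x y : X} (hx : x ∈ K) (hy : y ∈ K)
    (hfx : ∀ i, f i x ∈ K) (hfy : ∀ i, f i y ∈ K) (w : List I) :
    dist (compWord f w x) (compWord f w y) ≤ β ^ w.length * (diam K / β) := by
  refine dist_compWord_le hcontr hβ0.le hβ1 ?_ (fun i => ?_) w
  · exact (dist_le_diam_of_mem hK hx hy).trans (le_div_self diam_nonneg hβ0 hβ1)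
  · rw [mul_div_cancel₀ _ hβ0.ne']
    exact dist_le_diam_of_mem hK (hfx i) (hfy i)

theorem subset_of_iUnion_image_eq (hcontr : IsConvexContractionWith f (β ^ 2)) (hβ0 : 0 < β)
    (hβ1 : β < 1) {S T : Set X} (hS : ⋃ i, f i '' S = S) (hT : ∀ i, MapsTo (f i) T T)
    (hSb : Bornology.IsBounded S) (hTb : Bornology.IsBounded T) (hTc : IsClosed T)
    (hTne : T.Nonempty) : S ⊆ T := by
  intro x hx
  obtain ⟨y₀, hy₀⟩ := hTne
  have hbound : ∀ n : ℕ, infDist x T ≤ β ^ n * (diam (S ∪ T) / β) := by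
    intro n
    obtain ⟨w, rfl, y, hy, rfl⟩ := exists_compWord_eq_of_subset hS.superset n hx
    calc infDist (compWord f w y) T ≤ dist (compWord f w y) (compWord f w y₀) :=
          infDist_le_dist_of_mem (compWord_mem hT hy₀ w)
      _ ≤ β ^ w.length * (diam (S ∪ T) / β) :=
          dist_compWord_le_of_mem hcontr hβ0 hβ1.le (hSb.union hTb) (.inl hy) (.inr hy₀)
            (fun i => .inl (mapsTo_of_iUnion_image_eq hS i hy)) (fun i => .inr (hT i hy₀)) w
  have hlim : Tendsto (fun n : ℕ => β ^ n * (diam (S ∪ T) / β)) atTop (𝓝 0) := by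
    simpa using (tendsto_pow_atTop_nhds_zero_of_lt_one hβ0.le hβ1).mul_const _
  exact (hTc.mem_iff_infDist_zero ⟨y₀, hy₀⟩).2
    (le_antisymm (ge_of_tendsto' hlim hbound) infDist_nonneg)

theorem eq_of_iUnion_image_eq (hcontr : IsConvexContractionWith f (β ^ 2)) (hβ0 : 0 < β)
    (hβ1 : β < 1) {S T : Set X} (hS : ⋃ i, f i '' S = S) (hT : ⋃ i, f i '' T = T)
    (hSc : IsCompact S) (hTc : IsCompact T) (hSne : S.Nonempty) (hTne : T.Nonempty) : S = T :=
  (subset_of_iUnion_image_eq hcontr hβ0 hβ1 hS (mapsTo_of_iUnion_image_eq hT) hSc.isBounded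
      hTc.isBounded hTc.isClosed hTne).antisymm
    (subset_of_iUnion_image_eq hcontr hβ0 hβ1 hT (mapsTo_of_iUnion_image_eq hS) hTc.isBounded
      hSc.isBounded hSc.isClosed hSne)

section Address

variable [TopologicalSpace I] [DiscreteTopology I]

def approx (f : I → X → X) (x₀ : X) (n : ℕ) : C(ℕ → I, X) where
  toFun ω := compWord f (List.ofFn fun k : Fin n => ω k) x₀
  continuous_toFun :=
    (continuous_of_discreteTopology (f := fun v : Fin n → I => compWord f (List.ofFn v) x₀)).comp
      (continuous_pi fun k => continuous_apply (k : ℕ))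

lemma approx_apply (x₀ : X) (n : ℕ) (ω : ℕ → I) :
    approx f x₀ n ω = compWord f (List.ofFn fun k : Fin n => ω k) x₀ := rfl

lemma approx_succ_apply (x₀ : X) (n : ℕ) (ω : ℕ → I) :
    approx f x₀ (n + 1) ω = compWord f (List.ofFn fun k : Fin n => ω k) (f (ω n) x₀) := by
  simp only [approx, ContinuousMap.coe_mk, List.ofFn_succ', List.concat_eq_append,
    compWord_append_singleton, Fin.val_castSucc, Fin.val_last]

lemma approx_succ_apply' (x₀ : X) (n : ℕ) (ω : ℕ → I) :
    approx f x₀ (n + 1) ω = f (ω 0) (approx f x₀ n fun k => ω (k + 1)) := by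
  simp only [approx, ContinuousMap.coe_mk, List.ofFn_succ, compWord_cons, Fin.val_zero,
    Fin.val_succ]

lemma exists_dist_approx_succ_le [Finite I] (hcontr : IsConvexContractionWith f (β ^ 2))
    (hβ0 : 0 < β) (hβ1 : β ≤ 1) (x₀ : X) :
    ∃ C, ∀ n, dist (approx f x₀ n) (approx f x₀ (n + 1)) ≤ C * β ^ n := by
  set K := insert x₀ (range (fun j => f j x₀) ∪ range fun p : I × I => f p.1 (f p.2 x₀))
  have hK : Bornology.IsBounded K :=
    ((finite_range _).union (finite_range _)).insert x₀ |>.isBounded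
  refine ⟨diam K / β, fun n => (ContinuousMap.dist_le (by positivity)).2 fun ω => ?_⟩
  have hword := dist_compWord_le_of_mem hcontr hβ0 hβ1 hK (mem_insert x₀ _) (.inr (.inl ⟨ω n, rfl⟩))
    (fun i => .inr (.inl ⟨i, rfl⟩)) (fun i => .inr (.inr ⟨(i, ω n), rfl⟩))
    (List.ofFn fun k : Fin n => ω k)
  rw [approx_apply, approx_succ_apply, mul_comm]
  simpa only [List.length_ofFn] using hword

end Address

theorem exists_compact_iUnion_image_eq [CompleteSpace X] [Nonempty X] [Finite I] [Nonempty I]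
    (hcontr : IsConvexContractionWith f (β ^ 2)) (hcont : ∀ i, Continuous (f i))
    (hβ0 : 0 < β) (hβ1 : β < 1) :
    ∃ A : Set X, A.Nonempty ∧ IsCompact A ∧ ⋃ i, f i '' A = A := by
  let : TopologicalSpace I := ⊥
  have : DiscreteTopology I := ⟨rfl⟩
  obtain ⟨x₀⟩ := ‹Nonempty X›
  obtain ⟨C, hC⟩ := exists_dist_approx_succ_le hcontr hβ0 hβ1.le x₀
  obtain ⟨π, hπ⟩ := cauchySeq_tendsto_of_complete (cauchySeq_of_le_geometric β C hβ1 hC)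
  have heval (ω : ℕ → I) : Tendsto (fun n => approx f x₀ n ω) atTop (𝓝 (π ω)) :=
    ((continuous_eval_const ω).tendsto π).comp hπ
  have hshift (ω : ℕ → I) : π ω = f (ω 0) (π fun k => ω (k + 1)) := by
    refine tendsto_nhds_unique ((heval ω).comp (tendsto_add_atTop_nat 1)) ?_
    simp only [Function.comp_def, approx_succ_apply']
    exact ((hcont _).tendsto _).comp (heval _)
  refine ⟨range π, range_nonempty π, isCompact_range π.continuous, ?_⟩
  ext x
  simp only [mem_iUnion, mem_image, mem_range]
  constructor
  · rintro ⟨i, _, ⟨ω, rfl⟩, rfl⟩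
    exact ⟨fun | 0 => i | k + 1 => ω k, hshift _⟩
  · rintro ⟨ω, rfl⟩
    exact ⟨ω 0, _, ⟨_, rfl⟩, (hshift ω).symm⟩

end Contraction

end IFS

/-- The set function of an IFS consisting of convex contractions maps nonempty compact
sets to nonempty compact sets and has a unique fixed point in the hyperspace of
nonempty compact sets. -/
theorem IFS_convex_contractions_set_function_unique_fixed_point
    {X : Type*} [MetricSpace X] [CompleteSpace X] [Nonempty X]
    {I : Type*} [Finite I] [Nonempty I]
    (f : I → X → X) (hf : ∀ i, Continuous (f i))
    (a b c : I → I → ℝ)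
    (ha : ∀ i j, 0 ≤ a i j) (hb : ∀ i j, 0 ≤ b i j) (hc : ∀ i j, 0 ≤ c i j)
    (hd : ∀ i j, a i j + b i j + c i j < 1)
    (hcc : ∀ i j (x y : X),
      dist (f i (f j x)) (f i (f j y)) ≤
        a i j * dist x y + b i j * dist (f i x) (f i y) + c i j * dist (f j x) (f j y)) :
    (∀ B : Set X, B.Nonempty → IsCompact B →
      (⋃ i, f i '' B).Nonempty ∧ IsCompact (⋃ i, f i '' B)) ∧
    ∃! A : Set X, A.Nonempty ∧ IsCompact A ∧ (⋃ i, f i '' A) = A := by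
  obtain ⟨β, hβ0, hβ1, hβ⟩ := IFS.exists_pos_lt_one_forall_le_sq
    (fun p : I × I => a p.1 p.2 + b p.1 p.2 + c p.1 p.2) fun p => hd p.1 p.2
  have hcontr : IFS.IsConvexContractionWith f (β ^ 2) :=
    IFS.isConvexContractionWith_of_le ha hb hc (fun i j => hβ (i, j)) hcc
  refine ⟨fun B hB hBc => ⟨?_, isCompact_iUnion fun i => hBc.image (hf i)⟩, ?_⟩
  · obtain ⟨i⟩ := ‹Nonempty I›
    exact (hB.image (f i)).mono (subset_iUnion (fun i => f i '' B) i)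
  obtain ⟨A, hAne, hAc, hA⟩ := IFS.exists_compact_iUnion_image_eq hcontr hf hβ0 hβ1
  exact ⟨A, ⟨hAne, hAc, hA⟩, fun A' ⟨hA'ne, hA'c, hA'⟩ =>
    IFS.eq_of_iUnion_image_eq hcontr hβ0 hβ1 hA' hA hA'c hAc hA'ne hAne⟩
end

section
/- Let S = ((X,d), (f_i)_{i∈I}) be an iterated function system consisting of convex contractions, and for each ω ∈ I^ℕ let a_ω be the limit point such that h(f_{[ω]_n}(B), {a_ω}) → 0 for every B ∈ 𝒦(X). Then this convergence is uniform in ω: for every B ∈ 𝒦(X), sup_{ω ∈ I^ℕ} h(f_{[ω]_n}(B), {a_ω}) → 0 as n → ∞. -/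
/-!
Every two steps a convex contraction shrinks distances by a factor `μ² < 1` relative to the
largest of `d(x, y)`, `d(fᵢ x, fᵢ y)`, `d(fⱼ x, fⱼ y)`. An induction over all words at once
therefore gives `d(f_{[ω]_n} x, f_{[ω]_n} y) ≤ K μⁿ`, where `K` depends on `x` and `y` only through
finitely many distances. So each orbit `f_{[ω]_n} x₀` is Cauchy at a geometric rate that does not
depend on `ω`, and stays within `C μⁿ` of its limit `a_ω`. Compactness of `B` bounds `K` uniformly
for `x ∈ B`, whence `h(f_{[ω]_n}(B), {a_ω}) ≤ R μⁿ` for every `ω`.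
-/

/-- `compWord f ω n = f (ω 0) ∘ f (ω 1) ∘ ... ∘ f (ω (n-1))`, i.e. the composition
`f_{ω₁} ∘ ... ∘ f_{ω_n}` determined by the first `n` letters of the word `ω`. -/
def compWord {I X : Type*} (f : I → X → X) : (ℕ → I) → ℕ → X → X
  | _, 0 => id
  | ω, n + 1 => f (ω 0) ∘ compWord f (fun k => ω (k + 1)) n

open Filter Topology

section CompWord

variable {I X : Type*} (f : I → X → X)

theorem compWord_succ_apply (ω : ℕ → I) (n : ℕ) (x : X) :
    compWord f ω (n + 1) x = compWord f ω n (f (ω n) x) := by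
  induction n generalizing ω with
  | zero => rfl
  | succ n ih => exact congrArg (f (ω 0)) (ih fun k => ω (k + 1))

end CompWord

section ConvexContraction

variable {I X : Type*} [PseudoMetricSpace X]

def IsConvexContraction (f : I → X → X) (q : ℝ) : Prop :=
  ∀ i j x y, dist (f i (f j x)) (f i (f j y)) ≤
    q * max (dist x y) (max (dist (f i x) (f i y)) (dist (f j x) (f j y)))

theorem isConvexContraction_of_coeff_le {f : I → X → X} {a b c : I → I → ℝ} {q : ℝ}
    (ha : ∀ i j, 0 ≤ a i j) (hb : ∀ i j, 0 ≤ b i j) (hc : ∀ i j, 0 ≤ c i j)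
    (hq : ∀ i j, a i j + b i j + c i j ≤ q)
    (hcc : ∀ i j (x y : X),
      dist (f i (f j x)) (f i (f j y)) ≤
        a i j * dist x y + b i j * dist (f i x) (f i y) + c i j * dist (f j x) (f j y)) :
    IsConvexContraction f q := by
  intro i j x y
  set m := max (dist x y) (max (dist (f i x) (f i y)) (dist (f j x) (f j y)))
  have hm : 0 ≤ m := le_max_of_le_left dist_nonneg
  calc dist (f i (f j x)) (f i (f j y))
      ≤ a i j * dist x y + b i j * dist (f i x) (f i y) + c i j * dist (f j x) (f j y) :=
        hcc i j x y
    _ ≤ a i j * m + b i j * m + c i j * m := by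
        gcongr
        exacts [ha i j, le_max_left _ _, hb i j, (le_max_left _ _).trans (le_max_right _ _),
          hc i j, (le_max_right _ _).trans (le_max_right _ _)]
    _ = (a i j + b i j + c i j) * m := by ring
    _ ≤ q * m := mul_le_mul_of_nonneg_right (hq i j) hm

variable {f : I → X → X} {μ : ℝ}

theorem IsConvexContraction.dist_compWord_le (hf : IsConvexContraction f (μ ^ 2))
    (hμ0 : 0 ≤ μ) (hμ1 : μ ≤ 1) {x y : X} {K : ℝ} (h0 : dist x y ≤ K)
    (h1 : ∀ i, dist (f i x) (f i y) ≤ K * μ) (n : ℕ) (ω : ℕ → I) :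
    dist (compWord f ω n x) (compWord f ω n y) ≤ K * μ ^ n := by
  induction n using Nat.twoStepInduction generalizing ω with
  | zero => simpa [compWord] using h0
  | one => simpa [compWord] using h1 (ω 0)
  | more n ih₀ ih₁ =>
    set u := compWord f (fun k => ω (k + 2)) n x
    set v := compWord f (fun k => ω (k + 2)) n y
    have hK : 0 ≤ K := dist_nonneg.trans h0
    have hpow : K * μ ^ (n + 1) ≤ K * μ ^ n :=
      mul_le_mul_of_nonneg_left (pow_le_pow_of_le_one hμ0 hμ1 n.le_succ) hK
    have huv : dist u v ≤ K * μ ^ n := ih₀ _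
    -- `f (ω 0) u` is the image of `x` under `ω` with its second letter deleted
    have hu₀ : dist (f (ω 0) u) (f (ω 0) v) ≤ K * μ ^ n :=
      (ih₁ (Stream'.cons (ω 0) fun k => ω (k + 2))).trans hpow
    have hu₁ : dist (f (ω 1) u) (f (ω 1) v) ≤ K * μ ^ n := (ih₁ fun k => ω (k + 1)).trans hpow
    calc dist (f (ω 0) (f (ω 1) u)) (f (ω 0) (f (ω 1) v))
        ≤ μ ^ 2 * max (dist u v) (max (dist (f (ω 0) u) (f (ω 0) v))
            (dist (f (ω 1) u) (f (ω 1) v))) := hf _ _ _ _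
      _ ≤ μ ^ 2 * (K * μ ^ n) := by gcongr; exact max_le huv (max_le hu₀ hu₁)
      _ = K * μ ^ (n + 2) := by ring


theorem IsConvexContraction.dist_compWord_le_div_mul_pow [Fintype I]
    (hf : IsConvexContraction f (μ ^ 2)) (hμ0 : 0 < μ) (hμ1 : μ ≤ 1) (x y : X) (n : ℕ)
    (ω : ℕ → I) :
    dist (compWord f ω n x) (compWord f ω n y) ≤
      (dist x y + ∑ i, dist (f i x) (f i y)) / μ * μ ^ n := by
  have hsum : 0 ≤ ∑ i, dist (f i x) (f i y) := Finset.sum_nonneg fun _ _ => dist_nonneg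
  refine hf.dist_compWord_le hμ0.le hμ1 ?_ (fun i => ?_) n ω
  · rw [le_div_iff₀ hμ0]
    nlinarith [dist_nonneg (x := x) (y := y)]
  · rw [div_mul_cancel₀ _ hμ0.ne']
    have := Finset.single_le_sum (fun j _ => dist_nonneg (x := f j x) (y := f j y))
      (Finset.mem_univ i)
    linarith [dist_nonneg (x := x) (y := y)]

theorem IsConvexContraction.exists_dist_compWord_le_of_tendsto [Fintype I]
    (hf : IsConvexContraction f (μ ^ 2)) (hμ0 : 0 < μ) (hμ1 : μ < 1) (x : X) :
    ∃ C, ∀ (ω : ℕ → I) (p : X), Tendsto (fun n => compWord f ω n x) atTop (𝓝 p) →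
      ∀ n, dist (compWord f ω n x) p ≤ C * μ ^ n := by
  set C := ∑ k, (dist x (f k x) + ∑ i, dist (f i x) (f i (f k x))) / μ
  refine ⟨C / (1 - μ), fun ω p hp n => ?_⟩
  have hstep : ∀ n, dist (compWord f ω n x) (compWord f ω (n + 1) x) ≤ C * μ ^ n := by
    intro n
    rw [compWord_succ_apply]
    refine (hf.dist_compWord_le_div_mul_pow hμ0 hμ1.le _ _ n ω).trans ?_
    gcongr
    exact Finset.single_le_sum
      (f := fun k => (dist x (f k x) + ∑ i, dist (f i x) (f i (f k x))) / μ)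
      (fun k _ => by positivity) (Finset.mem_univ _)
  calc dist (compWord f ω n x) p ≤ C * μ ^ n / (1 - μ) :=
        dist_le_of_le_geometric_of_tendsto μ C hμ1 hstep hp n
    _ = C / (1 - μ) * μ ^ n := by ring

theorem IsConvexContraction.exists_dist_compWord_le_on_isCompact [Fintype I]
    (hf : IsConvexContraction f (μ ^ 2)) (hcont : ∀ i, Continuous (f i)) (hμ0 : 0 < μ)
    (hμ1 : μ < 1) {B : Set X} (hB : IsCompact B) {x₀ : X} {p : (ℕ → I) → X}
    (hp : ∀ ω, Tendsto (fun n => compWord f ω n x₀) atTop (𝓝 (p ω))) :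
    ∃ R, ∀ ω n, ∀ x ∈ B, dist (compWord f ω n x) (p ω) ≤ R * μ ^ n := by
  obtain ⟨C, hC⟩ := hf.exists_dist_compWord_le_of_tendsto hμ0 hμ1 x₀
  obtain ⟨M, hM⟩ := hB.bddAbove_image (f := fun x => dist x x₀ + ∑ i, dist (f i x) (f i x₀))
    (by fun_prop)
  refine ⟨M / μ + C, fun ω n x hx => ?_⟩
  have hxM : dist x x₀ + ∑ i, dist (f i x) (f i x₀) ≤ M := hM ⟨x, hx, rfl⟩
  calc dist (compWord f ω n x) (p ω)
      ≤ dist (compWord f ω n x) (compWord f ω n x₀) + dist (compWord f ω n x₀) (p ω) :=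
        dist_triangle _ _ _
    _ ≤ M / μ * μ ^ n + C * μ ^ n := by
        gcongr
        · exact (hf.dist_compWord_le_div_mul_pow hμ0 hμ1.le x x₀ n ω).trans (by gcongr)
        · exact hC ω _ (hp ω) n
    _ = (M / μ + C) * μ ^ n := by ring

end ConvexContraction

theorem exists_pos_lt_one_forall_le_sq {ι : Type*} [Finite ι] {g : ι → ℝ} (hg : ∀ i, g i < 1) :
    ∃ μ, 0 < μ ∧ μ < 1 ∧ ∀ i, g i ≤ μ ^ 2 := by
  obtain ⟨⟨q, hq⟩, hgq⟩ := Finite.exists_le fun i => (⟨g i, hg i⟩ : Set.Iio (1 : ℝ))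
  set r := max q 0
  have hr1 : r < 1 := max_lt hq one_pos
  -- `((1 + r) / 2) ^ 2 - r = ((1 - r) / 2) ^ 2 ≥ 0`
  refine ⟨(1 + r) / 2, by positivity, by linarith, fun i => ?_⟩
  have hgr : g i ≤ r := (Subtype.coe_le_coe.2 (hgq i)).trans (le_max_left q 0)
  nlinarith [sq_nonneg (1 - r)]

theorem hausdorffEDist_singleton_le_ofReal {X : Type*} [PseudoMetricSpace X] {s : Set X}
    (hs : s.Nonempty) {p : X} {r : ℝ} (h : ∀ x ∈ s, dist x p ≤ r) :
    Metric.hausdorffEDist s {p} ≤ ENNReal.ofReal r := by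
  refine Metric.hausdorffEDist_le_of_mem_edist (fun x hx => ⟨p, rfl, ?_⟩) ?_
  · rw [edist_dist]; exact ENNReal.ofReal_le_ofReal (h x hx)
  · rintro _ rfl
    obtain ⟨x, hx⟩ := hs
    exact ⟨x, hx, by rw [edist_dist, dist_comm]; exact ENNReal.ofReal_le_ofReal (h x hx)⟩

theorem IFS_convex_contractions_uniform_limit_general
    {X : Type*} [MetricSpace X]
    {I : Type*} [Finite I]
    (f : I → X → X) (hf : ∀ i, Continuous (f i))
    (a b c : I → I → ℝ)
    (ha : ∀ i j, 0 ≤ a i j) (hb : ∀ i j, 0 ≤ b i j) (hc : ∀ i j, 0 ≤ c i j)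
    (hd : ∀ i j, a i j + b i j + c i j < 1)
    (hcc : ∀ i j (x y : X),
      dist (f i (f j x)) (f i (f j y)) ≤
        a i j * dist x y + b i j * dist (f i x) (f i y) + c i j * dist (f j x) (f j y))
    (aω : (ℕ → I) → X)
    (haω : ∀ (ω : ℕ → I) (B : Set X), B.Nonempty → IsCompact B →
      Filter.Tendsto
        (fun n : ℕ => EMetric.hausdorffEdist (compWord f ω n '' B) {aω ω})
        Filter.atTop (nhds 0)) :
    ∀ B : Set X, B.Nonempty → IsCompact B →
      Filter.Tendsto
        (fun n : ℕ => ⨆ ω : ℕ → I, EMetric.hausdorffEdist (compWord f ω n '' B) {aω ω})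
        Filter.atTop (nhds 0) := by
  intro B hB hBc
  have := Fintype.ofFinite I
  obtain ⟨μ, hμ0, hμ1, hμ⟩ := exists_pos_lt_one_forall_le_sq
    (g := fun p : I × I => a p.1 p.2 + b p.1 p.2 + c p.1 p.2) fun p => hd p.1 p.2
  have hconv : IsConvexContraction f (μ ^ 2) :=
    isConvexContraction_of_coeff_le ha hb hc (fun i j => hμ (i, j)) hcc
  obtain ⟨x₀, hx₀⟩ := hB
  have horbit : ∀ ω, Tendsto (fun n => compWord f ω n x₀) atTop (𝓝 (aω ω)) := fun ω => by
    have h : Tendsto (fun n => Metric.hausdorffEDist (compWord f ω n '' {x₀}) {aω ω}) atTop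
        (𝓝 0) := haω ω {x₀} (Set.singleton_nonempty x₀) isCompact_singleton
    simpa [Metric.hausdorffEDist_singleton, ← tendsto_iff_edist_tendsto_0] using h
  obtain ⟨R, hR⟩ := hconv.exists_dist_compWord_le_on_isCompact hf hμ0 hμ1 hBc horbit
  have hsup : ∀ n, ⨆ ω : ℕ → I, Metric.hausdorffEDist (compWord f ω n '' B) {aω ω} ≤
      ENNReal.ofReal (R * μ ^ n) := fun n => iSup_le fun ω =>
    hausdorffEDist_singleton_le_ofReal ⟨_, Set.mem_image_of_mem _ hx₀⟩
      (Set.forall_mem_image.2 fun x hx => hR ω n x hx)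
  have hgeom : Tendsto (fun n => ENNReal.ofReal (R * μ ^ n)) atTop (𝓝 0) := by
    simpa using ENNReal.tendsto_ofReal
      ((tendsto_pow_atTop_nhds_zero_of_lt_one hμ0.le hμ1).const_mul R)
  exact tendsto_of_tendsto_of_tendsto_of_le_of_le tendsto_const_nhds hgeom
    (fun _ => zero_le) hsup

/-- The convergence of f_{[ω]_n}(B) to {a_ω} is uniform in the word ω. -/
theorem IFS_convex_contractions_uniform_limit
    {X : Type*} [MetricSpace X] [CompleteSpace X] [Nonempty X]
    {I : Type*} [Finite I] [Nonempty I]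
    (f : I → X → X) (hf : ∀ i, Continuous (f i))
    (a b c : I → I → ℝ)
    (ha : ∀ i j, 0 ≤ a i j) (hb : ∀ i j, 0 ≤ b i j) (hc : ∀ i j, 0 ≤ c i j)
    (hd : ∀ i j, a i j + b i j + c i j < 1)
    (hcc : ∀ i j (x y : X),
      dist (f i (f j x)) (f i (f j y)) ≤
        a i j * dist x y + b i j * dist (f i x) (f i y) + c i j * dist (f j x) (f j y))
    (aω : (ℕ → I) → X)
    (haω : ∀ (ω : ℕ → I) (B : Set X), B.Nonempty → IsCompact B →
      Filter.Tendsto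
        (fun n : ℕ => EMetric.hausdorffEdist (compWord f ω n '' B) {aω ω})
        Filter.atTop (nhds 0)) :
    ∀ B : Set X, B.Nonempty → IsCompact B →
      Filter.Tendsto
        (fun n : ℕ => ⨆ ω : ℕ → I, EMetric.hausdorffEdist (compWord f ω n '' B) {aω ω})
        Filter.atTop (nhds 0) :=
  IFS_convex_contractions_uniform_limit_general f hf a b c ha hb hc hd hcc aω haω
end

section
/- Let S = ((X,d), (f_i)_{i∈I}) be an iterated function system consisting of convex contractions with attractor A. For every ω ∈ I^ℕ, the diameters of the sets A_{[ω]_n} = f_{ω₁}∘…∘f_{ω_n}(A) tend to 0 as n → ∞. -/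
/-!
Let `q < 1` bound every `a i j + b i j + c i j` and let `D n = levelDiam f A n` be the supremum
of the diameters of the pieces `f_w(A)` with `|w| = n`. A piece of level `n + 2` has the form
`f_i (f_j S)` with `S` a piece of level `n`, while `f_i S` and `f_j S` are pieces of level
`n + 1`; so the convex-contraction inequality gives `D (n + 2) ≤ q * max (D n) (D (n + 1))`,
whence `D n ≤ q ^ (n / 2) * diam A → 0`.
-/

open Filter Topology Set Metric
open scoped ENNReal

lemma exists_lt_one_forall_le_of_finite {ι : Type*} [Finite ι] {s : ι → ℝ}
    (hs : ∀ i, s i < 1) : ∃ q < 1, ∀ i, s i ≤ q := by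
  have : ∀ᶠ q in 𝓝[<] (1 : ℝ), q < 1 ∧ ∀ i, s i ≤ q :=
    (eventually_nhdsWithin_of_forall fun _ hq => hq).and
      (eventually_nhdsWithin_of_eventually_nhds (eventually_all.2 fun i => eventually_ge_nhds (hs i)))
  exact this.exists

namespace ENNReal

variable {u : ℕ → ℝ≥0∞} {q : ℝ≥0∞}

lemma le_pow_half_mul_max_of_le_mul_max (hq : q ≤ 1)
    (h : ∀ n, u (n + 2) ≤ q * max (u n) (u (n + 1))) (n : ℕ) :
    u n ≤ q ^ (n / 2) * max (u 0) (u 1) := by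
  induction n using Nat.twoStepInduction with
  | zero => simp
  | one => simp
  | more n ih ih' =>
    calc u (n + 2) ≤ q * max (u n) (u (n + 1)) := h n
      _ ≤ q * (q ^ (n / 2) * max (u 0) (u 1)) := by
        gcongr
        refine max_le ih (ih'.trans ?_)
        gcongr ?_ * _
        exact pow_le_pow_right_of_le_one' hq (Nat.div_le_div_right n.le_succ)
      _ = q ^ ((n + 2) / 2) * max (u 0) (u 1) := by
        rw [Nat.add_div_right n two_pos, pow_succ', mul_assoc]

lemma tendsto_zero_of_le_mul_max (hq : q < 1) (hu₀ : u 0 ≠ ∞) (hu₁ : u 1 ≠ ∞)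
    (h : ∀ n, u (n + 2) ≤ q * max (u n) (u (n + 1))) : Tendsto u atTop (𝓝 0) := by
  have hbound : Tendsto (fun n => q ^ (n / 2) * max (u 0) (u 1)) atTop (𝓝 0) := by
    simpa using ENNReal.Tendsto.mul_const ((ENNReal.tendsto_pow_atTop_nhds_zero_of_lt_one hq).comp
      (Nat.tendsto_div_const_atTop two_ne_zero)) (Or.inr (max_ne_top hu₀ hu₁))
  exact tendsto_of_tendsto_of_tendsto_of_le_of_le tendsto_const_nhds hbound (fun _ => zero_le)
    (le_pow_half_mul_max_of_le_mul_max hq.le h)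

end ENNReal

lemma ediam_image_image_le {X Y : Type*} [PseudoMetricSpace X] [PseudoMetricSpace Y]
    {f : X → Y} {g : X → X} {a b c : ℝ} (ha : 0 ≤ a) (hb : 0 ≤ b) (hc : 0 ≤ c)
    (h : ∀ x y, dist (f (g x)) (f (g y)) ≤
      a * dist x y + b * dist (f x) (f y) + c * dist (g x) (g y)) (S : Set X) :
    ediam (f '' (g '' S)) ≤ ENNReal.ofReal a * ediam S + ENNReal.ofReal b * ediam (f '' S) +
      ENNReal.ofReal c * ediam (g '' S) := by
  refine ediam_le ?_
  rintro _ ⟨_, ⟨x, hx, rfl⟩, rfl⟩ _ ⟨_, ⟨y, hy, rfl⟩, rfl⟩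
  calc edist (f (g x)) (f (g y))
      ≤ ENNReal.ofReal (a * dist x y + b * dist (f x) (f y) + c * dist (g x) (g y)) := by
        rw [edist_dist]; exact ENNReal.ofReal_le_ofReal (h x y)
    _ = ENNReal.ofReal a * edist x y + ENNReal.ofReal b * edist (f x) (f y) +
          ENNReal.ofReal c * edist (g x) (g y) := by
        rw [ENNReal.ofReal_add (by positivity) (by positivity),
          ENNReal.ofReal_add (by positivity) (by positivity), ENNReal.ofReal_mul ha,
          ENNReal.ofReal_mul hb, ENNReal.ofReal_mul hc, edist_dist, edist_dist, edist_dist]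
    _ ≤ _ := by
        gcongr
        · exact edist_le_ediam_of_mem hx hy
        · exact edist_le_ediam_of_mem (mem_image_of_mem f hx) (mem_image_of_mem f hy)
        · exact edist_le_ediam_of_mem (mem_image_of_mem g hx) (mem_image_of_mem g hy)

section compWord

variable {I X : Type*} (f : I → X → X)

lemma compWord_add_two (ω : ℕ → I) (n : ℕ) :
    compWord f ω (n + 2) = f (ω 0) ∘ f (ω 1) ∘ compWord f (fun k => ω (k + 2)) n :=
  rfl

lemma mapsTo_compWord {A : Set X} (hA : ∀ i, MapsTo (f i) A A) (ω : ℕ → I) (n : ℕ) :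
    MapsTo (compWord f ω n) A A := by
  induction n generalizing ω with
  | zero => exact mapsTo_id A
  | succ n ih => exact (hA (ω 0)).comp (ih _)

section PseudoEMetricSpace

variable [PseudoEMetricSpace X] (A : Set X)

noncomputable def levelDiam (n : ℕ) : ℝ≥0∞ :=
  ⨆ ω : ℕ → I, ediam (compWord f ω n '' A)

lemma ediam_compWord_le_levelDiam (ω : ℕ → I) (n : ℕ) :
    ediam (compWord f ω n '' A) ≤ levelDiam f A n :=
  le_iSup (fun ω => ediam (compWord f ω n '' A)) ω

lemma levelDiam_le_ediam (hA : ∀ i, MapsTo (f i) A A) (n : ℕ) :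
    levelDiam f A n ≤ ediam A :=
  iSup_le fun ω => ediam_mono (mapsTo_compWord f hA ω n).image_subset

end PseudoEMetricSpace

lemma levelDiam_add_two_le [PseudoMetricSpace X] (A : Set X) {a b c : I → I → ℝ} {q : ℝ}
    (ha : ∀ i j, 0 ≤ a i j) (hb : ∀ i j, 0 ≤ b i j) (hc : ∀ i j, 0 ≤ c i j)
    (hq : ∀ i j, a i j + b i j + c i j ≤ q)
    (hcc : ∀ i j (x y : X), dist (f i (f j x)) (f i (f j y)) ≤
      a i j * dist x y + b i j * dist (f i x) (f i y) + c i j * dist (f j x) (f j y)) (n : ℕ) :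
    levelDiam f A (n + 2) ≤
      ENNReal.ofReal q * max (levelDiam f A n) (levelDiam f A (n + 1)) := by
  refine iSup_le fun ω => ?_
  set M := max (levelDiam f A n) (levelDiam f A (n + 1))
  set S := compWord f (fun k => ω (k + 2)) n '' A
  have hS : ediam S ≤ M := (ediam_compWord_le_levelDiam f A _ n).trans (le_max_left _ _)
  have hS₀ : ediam (f (ω 0) '' S) ≤ M := by
    refine le_trans ?_ (le_max_right _ _)
    rw [← image_comp]
    exact ediam_compWord_le_levelDiam f A (Stream'.cons (ω 0) fun k => ω (k + 2)) (n + 1)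
  have hS₁ : ediam (f (ω 1) '' S) ≤ M := by
    refine le_trans ?_ (le_max_right _ _)
    rw [← image_comp]
    exact ediam_compWord_le_levelDiam f A (fun k => ω (k + 1)) (n + 1)
  calc ediam (compWord f ω (n + 2) '' A) = ediam (f (ω 0) '' (f (ω 1) '' S)) := by
        rw [compWord_add_two, image_comp, image_comp]
    _ ≤ ENNReal.ofReal (a (ω 0) (ω 1)) * ediam S + ENNReal.ofReal (b (ω 0) (ω 1)) *
          ediam (f (ω 0) '' S) + ENNReal.ofReal (c (ω 0) (ω 1)) * ediam (f (ω 1) '' S) :=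
        ediam_image_image_le (ha _ _) (hb _ _) (hc _ _) (hcc _ _) S
    _ ≤ ENNReal.ofReal (a (ω 0) (ω 1)) * M + ENNReal.ofReal (b (ω 0) (ω 1)) * M +
          ENNReal.ofReal (c (ω 0) (ω 1)) * M := by
        gcongr
    _ = ENNReal.ofReal (a (ω 0) (ω 1) + b (ω 0) (ω 1) + c (ω 0) (ω 1)) * M := by
        rw [ENNReal.ofReal_add (add_nonneg (ha _ _) (hb _ _)) (hc _ _),
          ENNReal.ofReal_add (ha _ _) (hb _ _), add_mul, add_mul]
    _ ≤ ENNReal.ofReal q * M := by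
        gcongr
        exact hq _ _

end compWord

theorem IFS_convex_contractions_diam_tendsto_zero_general
    {X : Type*} [MetricSpace X]
    {I : Type*} [Finite I]
    (f : I → X → X)
    (a b c : I → I → ℝ)
    (ha : ∀ i j, 0 ≤ a i j) (hb : ∀ i j, 0 ≤ b i j) (hc : ∀ i j, 0 ≤ c i j)
    (hd : ∀ i j, a i j + b i j + c i j < 1)
    (hcc : ∀ i j (x y : X),
      dist (f i (f j x)) (f i (f j y)) ≤
        a i j * dist x y + b i j * dist (f i x) (f i y) + c i j * dist (f j x) (f j y))
    (A : Set X) (hAc : IsCompact A) (hAfix : (⋃ i, f i '' A) = A)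
    (ω : ℕ → I) :
    Filter.Tendsto (fun n : ℕ => EMetric.diam (compWord f ω n '' A))
      Filter.atTop (nhds 0) := by
  have hA : ∀ i, MapsTo (f i) A A := fun i x hx =>
    hAfix.subset (mem_iUnion_of_mem i (mem_image_of_mem (f i) hx))
  obtain ⟨q, hq₁, hq⟩ := exists_lt_one_forall_le_of_finite (fun p : I × I => hd p.1 p.2)
  have hfin : ∀ n, levelDiam f A n ≠ ∞ := fun n =>
    ne_top_of_le_ne_top hAc.isBounded.ediam_ne_top (levelDiam_le_ediam f A hA n)
  have hlim : Tendsto (levelDiam f A) atTop (𝓝 0) :=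
    ENNReal.tendsto_zero_of_le_mul_max (ENNReal.ofReal_lt_one.2 hq₁) (hfin 0) (hfin 1)
      (levelDiam_add_two_le f A ha hb hc (fun i j => hq (i, j)) hcc)
  exact tendsto_of_tendsto_of_tendsto_of_le_of_le tendsto_const_nhds hlim (fun _ => zero_le)
    (ediam_compWord_le_levelDiam f A ω)

/-- Along any infinite word ω, the diameters of the sets f_{[ω]_n}(A) tend to 0. -/
theorem IFS_convex_contractions_diam_tendsto_zero
    {X : Type*} [MetricSpace X] [CompleteSpace X] [Nonempty X]
    {I : Type*} [Finite I] [Nonempty I]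
    (f : I → X → X) (hf : ∀ i, Continuous (f i))
    (a b c : I → I → ℝ)
    (ha : ∀ i j, 0 ≤ a i j) (hb : ∀ i j, 0 ≤ b i j) (hc : ∀ i j, 0 ≤ c i j)
    (hd : ∀ i j, a i j + b i j + c i j < 1)
    (hcc : ∀ i j (x y : X),
      dist (f i (f j x)) (f i (f j y)) ≤
        a i j * dist x y + b i j * dist (f i x) (f i y) + c i j * dist (f j x) (f j y))
    (A : Set X) (hAne : A.Nonempty) (hAc : IsCompact A) (hAfix : (⋃ i, f i '' A) = A)
    (ω : ℕ → I) :
    Filter.Tendsto (fun n : ℕ => EMetric.diam (compWord f ω n '' A))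
      Filter.atTop (nhds 0) :=
  IFS_convex_contractions_diam_tendsto_zero_general f a b c ha hb hc hd hcc A hAc hAfix ω
end

section
/- Let S = ((X,d), (f_i)_{i∈I}) be an iterated function system consisting of convex contractions with attractor A, and for ω ∈ I^ℕ let a_ω be the point with h(f_{[ω]_n}(B), {a_ω}) → 0 for all B ∈ 𝒦(X). Then for every ω ∈ I^ℕ, the intersection ⋂_{n∈ℕ} f_{ω₁}∘…∘f_{ω_n}(A) equals the singleton {a_ω}. -/
open Filter Topology

namespace Metric

variable {X : Type*} [EMetricSpace X] {s : ℕ → Set X} {x : X}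

theorem iInter_subset_singleton_of_tendsto_hausdorffEDist
    (hs : Tendsto (fun n => hausdorffEDist (s n) {x}) atTop (𝓝 0)) :
    (⋂ n, s n) ⊆ {x} := by
  intro y hy
  have hyx : edist y x = 0 := by
    refine le_antisymm (ge_of_tendsto' hs fun n => ?_) zero_le
    calc edist y x = infEDist y {x} := infEDist_singleton.symm
      _ ≤ hausdorffEDist (s n) {x} :=
        infEDist_le_hausdorffEDist_of_mem (Set.mem_iInter.mp hy n)
  exact edist_eq_zero.mp hyx

theorem mem_iInter_of_tendsto_hausdorffEDist (hanti : Antitone s) (hclosed : ∀ n, IsClosed (s n))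
    (hs : Tendsto (fun n => hausdorffEDist (s n) {x}) atTop (𝓝 0)) :
    x ∈ ⋂ n, s n := by
  refine Set.mem_iInter.mpr fun n => ?_
  have hinf : infEDist x (s n) = 0 := by
    refine le_antisymm (ge_of_tendsto hs ?_) zero_le
    filter_upwards [eventually_ge_atTop n] with m hm
    calc infEDist x (s n) ≤ infEDist x (s m) := infEDist_anti (hanti hm)
      _ ≤ hausdorffEDist {x} (s m) := infEDist_le_hausdorffEDist_of_mem rfl
      _ = hausdorffEDist (s m) {x} := hausdorffEDist_comm
  rw [← (hclosed n).closure_eq]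
  exact mem_closure_iff_infEDist_zero.mpr hinf

theorem iInter_eq_singleton_of_tendsto_hausdorffEDist (hanti : Antitone s)
    (hclosed : ∀ n, IsClosed (s n))
    (hs : Tendsto (fun n => hausdorffEDist (s n) {x}) atTop (𝓝 0)) :
    (⋂ n, s n) = {x} :=
  Set.eq_singleton_iff_unique_mem.mpr
    ⟨mem_iInter_of_tendsto_hausdorffEDist hanti hclosed hs,
      fun _ hy => iInter_subset_singleton_of_tendsto_hausdorffEDist hs hy⟩

end Metric

section compWord

variable {I X : Type*} (f : I → X → X) (ω : ℕ → I)

theorem compWord_succ_eq_comp (n : ℕ) : compWord f ω (n + 1) = compWord f ω n ∘ f (ω n) := by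
  induction n generalizing ω with
  | zero => rfl
  | succ n ih =>
    change f (ω 0) ∘ compWord f (fun k => ω (k + 1)) (n + 1) = _
    rw [ih]
    rfl

theorem continuous_compWord [TopologicalSpace X] (hf : ∀ i, Continuous (f i)) (n : ℕ) :
    Continuous (compWord f ω n) := by
  induction n generalizing ω with
  | zero => exact continuous_id
  | succ n ih => exact (hf (ω 0)).comp (ih _)

theorem antitone_image_compWord {A : Set X} (hA : ∀ i, Set.MapsTo (f i) A A) :
    Antitone fun n => compWord f ω n '' A :=
  antitone_nat_of_succ_le fun n => by
    rw [compWord_succ_eq_comp, Set.image_comp]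
    exact Set.image_mono (hA _).image_subset

end compWord

theorem IFS_convex_contractions_iInter_eq_singleton_general
    {X : Type*} [MetricSpace X]
    {I : Type*}
    (f : I → X → X) (hf : ∀ i, Continuous (f i))
    (A : Set X) (hAne : A.Nonempty) (hAc : IsCompact A) (hAfix : (⋃ i, f i '' A) = A)
    (aω : (ℕ → I) → X)
    (haω : ∀ (ω : ℕ → I) (B : Set X), B.Nonempty → IsCompact B →
      Filter.Tendsto
        (fun n : ℕ => EMetric.hausdorffEdist (compWord f ω n '' B) {aω ω})
        Filter.atTop (nhds 0)) :
    ∀ ω : ℕ → I, (⋂ n : ℕ, compWord f ω n '' A) = {aω ω} := by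
  intro ω
  have hmaps : ∀ i, Set.MapsTo (f i) A A := fun i =>
    Set.mapsTo_iff_image_subset.mpr ((Set.subset_iUnion (fun i => f i '' A) i).trans hAfix.le)
  exact Metric.iInter_eq_singleton_of_tendsto_hausdorffEDist
    (antitone_image_compWord f ω hmaps)
    (fun n => (hAc.image (continuous_compWord f ω hf n)).isClosed)
    (haω ω A hAne hAc)

/-- The intersection of the sets A_{[ω]_n} is the singleton {a_ω}. -/
theorem IFS_convex_contractions_iInter_eq_singleton
    {X : Type*} [MetricSpace X] [CompleteSpace X] [Nonempty X]
    {I : Type*} [Finite I] [Nonempty I]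
    (f : I → X → X) (hf : ∀ i, Continuous (f i))
    (a b c : I → I → ℝ)
    (ha : ∀ i j, 0 ≤ a i j) (hb : ∀ i j, 0 ≤ b i j) (hc : ∀ i j, 0 ≤ c i j)
    (hd : ∀ i j, a i j + b i j + c i j < 1)
    (hcc : ∀ i j (x y : X),
      dist (f i (f j x)) (f i (f j y)) ≤
        a i j * dist x y + b i j * dist (f i x) (f i y) + c i j * dist (f j x) (f j y))
    (A : Set X) (hAne : A.Nonempty) (hAc : IsCompact A) (hAfix : (⋃ i, f i '' A) = A)
    (aω : (ℕ → I) → X)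
    (haω : ∀ (ω : ℕ → I) (B : Set X), B.Nonempty → IsCompact B →
      Filter.Tendsto
        (fun n : ℕ => EMetric.hausdorffEdist (compWord f ω n '' B) {aω ω})
        Filter.atTop (nhds 0)) :
    ∀ ω : ℕ → I, (⋂ n : ℕ, compWord f ω n '' A) = {aω ω} :=
  IFS_convex_contractions_iInter_eq_singleton_general f hf A hAne hAc hAfix aω haω
end
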